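/- lim_{n→∞} c(n)^(1/n) ≤ 2^(H(1/3)) < 1.8899, where H(x) = -x·log₂(x) - (1-x)·log₂(1-x) is the binary entropy function. -/

import Mathlib

/-- `Separates G u v T` means every walk from `u` to `v` in `G` meets `T`;
for `u, v ∉ T` this says `u` and `v` lie in different connected components of `G \ T`. -/
def Separates {V : Type*} (G : SimpleGraph V) (u v : V) (T : Set V) : Prop :=
  ∀ p : G.Walk u v, ∃ x ∈ p.support, x ∈ T

/-- `T` is an inclusion-wise minimal `u`–`v` separator in `G`:
`T ⊆ V(G) \ {u, v}`, removing `T` puts `u` and `v` in different connected components,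
and removing any proper subset `T' ⊊ T` leaves `u` and `v` in the same component. -/
def IsMinSeparator {V : Type*} (G : SimpleGraph V) (u v : V) (T : Set V) : Prop :=
  u ∉ T ∧ v ∉ T ∧ Separates G u v T ∧ ∀ T' ⊂ T, ¬ Separates G u v T'

/-- `mc G u v` is the number of inclusion-wise minimal `u`–`v` separators in `G`. -/
noncomputable def mc {V : Type*} (G : SimpleGraph V) (u v : V) : ℕ :=
  {T : Set V | IsMinSeparator G u v T}.ncard

/-- `g n` is the maximum of `mc G u v` over graphs `G` on `n + 2` vertices and
pairs of distinct vertices `u ≠ v`. -/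
noncomputable def g (n : ℕ) : ℕ :=
  sSup {k | ∃ (G : SimpleGraph (Fin (n + 2))) (u v : Fin (n + 2)), u ≠ v ∧ mc G u v = k}

/-- `T` is a vertex cut of `G`: removing `T` disconnects `G`, i.e. some two remaining
vertices lie in different connected components of `G \ T`. -/
def IsCutSet {V : Type*} (G : SimpleGraph V) (T : Set V) : Prop :=
  ∃ u v, u ∉ T ∧ v ∉ T ∧ Separates G u v T

/-- `T` is an inclusion-wise minimal vertex cut of `G`. -/
def IsMinCutSet {V : Type*} (G : SimpleGraph V) (T : Set V) : Prop :=
  IsCutSet G T ∧ ∀ T' ⊂ T, ¬ IsCutSet G T'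

/-- `c n` is the maximum number of inclusion-wise minimal vertex cuts of a graph
on `n` vertices. -/
noncomputable def c (n : ℕ) : ℕ :=
  sSup {k | ∃ G : SimpleGraph (Fin n), {T : Set (Fin n) | IsMinCutSet G T}.ncard = k}

/-- The binary entropy function `H(x) = -x log₂ x - (1 - x) log₂ (1 - x)`. -/
noncomputable def binH (x : ℝ) : ℝ :=
  -x * Real.logb 2 x - (1 - x) * Real.logb 2 (1 - x)

/-- The outer neighbourhood of `X` in `G`: all vertices outside `X` having a
neighbour in `X`. -/
def outNbhd {V : Type*} (G : SimpleGraph V) (X : Set V) : Set V :=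
  {y | y ∉ X ∧ ∃ x ∈ X, G.Adj x y}

/-- The vertex set of the connected component of `u` in `G \ T`: all vertices
reachable from `u` by a walk avoiding `T`. -/
def compOf {V : Type*} (G : SimpleGraph V) (T : Set V) (u : V) : Set V :=
  {x | ∃ p : G.Walk u x, ∀ y ∈ p.support, y ∉ T}

open Filter

section CGraphAux
open SimpleGraph
variable {V : Type*} {G : SimpleGraph V} {T : Set V} {u v : V}

lemma mem_compOf_self (hu : u ∉ T) : u ∈ compOf G T u :=
  ⟨Walk.nil, by simp [hu]⟩

lemma compOf_disj_T (x : V) (hx : x ∈ compOf G T u) : x ∉ T := by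
  obtain ⟨p, hp⟩ := hx
  exact hp x p.end_mem_support

lemma disjoint_compOf (hsep : Separates G u v T) :
    Disjoint (compOf G T u) (compOf G T v) := by
  rw [Set.disjoint_left]
  rintro x ⟨p, hp⟩ ⟨q, hq⟩
  obtain ⟨z, hz, hzT⟩ := hsep (p.append q.reverse)
  rw [Walk.support_append] at hz
  rcases List.mem_append.mp hz with h | h
  · exact hp z h hzT
  · have : z ∈ q.support := by
      have := List.mem_of_mem_tail h
      rwa [Walk.support_reverse, List.mem_reverse] at this
    exact hq z this hzT

lemma T_eq_outNbhd (hmin : IsMinCutSet G T) (hu : u ∉ T) (hv : v ∉ T)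
    (hsep : Separates G u v T) : T = outNbhd G (compOf G T u) := by
  classical
  ext x
  constructor
  · intro hxT
    have hxnc : x ∉ compOf G T u := fun h => compOf_disj_T x h hxT
    refine ⟨hxnc, ?_⟩
    -- use minimality with T \ {x}
    have hss : T \ {x} ⊂ T := Set.sdiff_singleton_ssubset.mpr hxT
    have hnc := hmin.2 _ hss
    rw [IsCutSet] at hnc
    push_neg at hnc
    have h1 : u ∉ T \ {x} := fun h => hu h.1
    have h2 : v ∉ T \ {x} := fun h => hv h.1
    have hnsep : ¬ Separates G u v (T \ {x}) := fun hs => hnc u v h1 h2 hs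
    rw [Separates] at hnsep
    push_neg at hnsep
    obtain ⟨p, hp⟩ := hnsep
    -- every vertex of p.support in T equals x
    have hponly : ∀ z ∈ p.support, z ∈ T → z = x := by
      intro z hz hzT
      by_contra hne
      exact hp z hz ⟨hzT, hne⟩
    obtain ⟨z, hz, hzT⟩ := hsep p
    have hxmem : x ∈ p.support := by rwa [hponly z hz hzT] at hz
    set q := p.takeUntil x hxmem with hq
    have hux : u ≠ x := fun h => hu (h ▸ hxT)
    obtain ⟨y, hadj, r, hqr⟩ := Walk.exists_eq_cons_of_ne (Ne.symm hux) q.reverse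
    have hysub : y ∈ q.support := by
      have : y ∈ q.reverse.support := by rw [hqr]; simp
      rwa [Walk.support_reverse, List.mem_reverse] at this
    have hyp : y ∈ p.support := Walk.support_takeUntil_subset p hxmem hysub
    have hyT : y ∉ T := by
      intro hyT
      exact hadj.ne ((hponly y hyp hyT).symm)
    -- x not in r.support
    have hcount : q.support.count x = 1 := Walk.count_support_takeUntil_eq_one p hxmem
    have hxr : x ∉ r.support := by
      have h1 : q.reverse.support = x :: r.support := by rw [hqr]; simp
      have : q.reverse.support.count x = 1 := by
        rw [Walk.support_reverse, List.count_reverse]; exact hcount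
      rw [h1] at this
      simp only [List.count_cons_self] at this
      intro hmem
      have := List.count_pos_iff.mpr hmem
      omega
    -- r.support avoids T
    have hrT : ∀ z ∈ r.support, z ∉ T := by
      intro z hz hzT
      have hzq : z ∈ q.support := by
        have : z ∈ q.reverse.support := by rw [hqr]; simp [hz]
        rwa [Walk.support_reverse, List.mem_reverse] at this
      have := hponly z (Walk.support_takeUntil_subset p hxmem hzq) hzT
      exact hxr (this ▸ hz)
    have hyC : y ∈ compOf G T u := by
      refine ⟨r.reverse, ?_⟩
      intro z hz
      rw [Walk.support_reverse, List.mem_reverse] at hz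
      exact hrT z hz
    exact ⟨y, hyC, hadj.symm⟩
  · rintro ⟨hxnc, c, hc, hadj⟩
    by_contra hxT
    obtain ⟨p, hp⟩ := hc
    refine hxnc ⟨p.concat hadj, ?_⟩
    intro z hz
    rw [Walk.support_concat, List.mem_append] at hz
    rcases hz with h | h
    · exact hp z h
    · simp at h; subst h; exact hxT

lemma exists_small_comp {n : ℕ} {G : SimpleGraph (Fin n)} {T : Set (Fin n)}
    (hmin : IsMinCutSet G T) :
    ∃ C : Set (Fin n), T = outNbhd G C ∧ 2 * C.ncard + T.ncard ≤ n := by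
  obtain ⟨⟨u, v, hu, hv, hsep⟩, hm⟩ := hmin
  set Cu := compOf G T u
  set Cv := compOf G T v
  have hTu : T = outNbhd G Cu := T_eq_outNbhd ⟨⟨u, v, hu, hv, hsep⟩, hm⟩ hu hv hsep
  have hsep' : Separates G v u T := by
    intro p
    obtain ⟨z, hz, hzT⟩ := hsep p.reverse
    rw [Walk.support_reverse, List.mem_reverse] at hz
    exact ⟨z, hz, hzT⟩
  have hTv : T = outNbhd G Cv := T_eq_outNbhd ⟨⟨v, u, hv, hu, hsep'⟩, hm⟩ hv hu hsep'
  have hd1 : Disjoint Cu Cv := disjoint_compOf hsep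
  have hd2 : Disjoint (Cu ∪ Cv) T := by
    rw [Set.disjoint_left]
    rintro x (hx | hx) hxT <;> exact compOf_disj_T x hx hxT
  have hsum : Cu.ncard + Cv.ncard + T.ncard ≤ n := by
    have h1 : (Cu ∪ Cv ∪ T).ncard = Cu.ncard + Cv.ncard + T.ncard := by
      rw [Set.ncard_union_eq hd2, Set.ncard_union_eq hd1]
    have h2 : (Cu ∪ Cv ∪ T).ncard ≤ (Set.univ : Set (Fin n)).ncard :=
      Set.ncard_le_ncard (Set.subset_univ _) Set.finite_univ
    rw [h1, Set.ncard_univ, Nat.card_eq_fintype_card, Fintype.card_fin] at h2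
    exact h2
  rcases le_total Cu.ncard Cv.ncard with h | h
  · exact ⟨Cu, hTu, by omega⟩
  · exact ⟨Cv, hTv, by omega⟩

lemma count_minCutSets {n : ℕ} (G : SimpleGraph (Fin n)) :
    {T : Set (Fin n) | IsMinCutSet G T}.ncard ≤
      2 * ∑ k ∈ Finset.range (n / 3 + 1), n.choose k := by
  classical
  set m := n / 3
  set 𝒜 : Set (Set (Fin n)) := {A | A.ncard ≤ m} with h𝒜
  -- card of 𝒜
  have hA : 𝒜.ncard ≤ ∑ k ∈ Finset.range (m + 1), n.choose k := by
    set bi : Finset (Finset (Fin n)) :=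
      (Finset.range (m + 1)).biUnion (fun k => Finset.univ.powersetCard k) with hbi
    have h1 : 𝒜.ncard ≤ (↑bi : Set (Finset (Fin n))).ncard := by
      refine Set.ncard_le_ncard_of_injOn (fun A => A.toFinite.toFinset) ?_ ?_ (Set.toFinite _)
      · intro A hA2
        have hcard : A.toFinite.toFinset.card = A.ncard :=
          (Set.ncard_eq_toFinset_card A A.toFinite).symm
        have hAm : A.ncard ≤ m := hA2
        simp only [Finset.mem_coe, hbi, Finset.mem_biUnion, Finset.mem_range]
        exact ⟨A.ncard, Nat.lt_succ_of_le hAm,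
          Finset.mem_powersetCard.mpr ⟨Finset.subset_univ _, hcard⟩⟩
      · intro A _ B _ h
        have := congrArg (fun s : Finset (Fin n) => (↑s : Set (Fin n))) h
        simpa [Set.Finite.coe_toFinset] using this
    have h2 : (↑bi : Set (Finset (Fin n))).ncard = bi.card := Set.ncard_coe_finset bi
    have h3 : bi.card ≤ ∑ k ∈ Finset.range (m + 1),
        (Finset.univ.powersetCard k : Finset (Finset (Fin n))).card :=
      Finset.card_biUnion_le
    have h4 : ∀ k ∈ Finset.range (m + 1),
        (Finset.univ.powersetCard k : Finset (Finset (Fin n))).card = n.choose k := by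
      intro k _; rw [Finset.card_powersetCard, Finset.card_univ, Fintype.card_fin]
    rw [Finset.sum_congr rfl h4] at h3
    exact (h2 ▸ h1).trans h3
  set S : Set (Set (Fin n)) := {T | IsMinCutSet G T} with hS
  have hsplit : S.ncard ≤ (S ∩ 𝒜).ncard + (S \ 𝒜).ncard := by
    conv_lhs => rw [← Set.inter_union_diff S 𝒜]
    exact Set.ncard_union_le _ _
  have hS1 : (S ∩ 𝒜).ncard ≤ 𝒜.ncard :=
    Set.ncard_le_ncard Set.inter_subset_right (Set.toFinite _)
  have hS2 : (S \ 𝒜).ncard ≤ 𝒜.ncard := by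
    set f : Set (Fin n) → Set (Fin n) := fun T =>
      if h : ∃ C : Set (Fin n), T = outNbhd G C ∧ 2 * C.ncard + T.ncard ≤ n
      then h.choose else ∅ with hf
    refine Set.ncard_le_ncard_of_injOn f ?_ ?_ (Set.toFinite _)
    · rintro T ⟨hTS, hTA⟩
      have hex : ∃ C : Set (Fin n), T = outNbhd G C ∧ 2 * C.ncard + T.ncard ≤ n :=
        exists_small_comp hTS
      simp only [hf, dif_pos hex]
      obtain ⟨_, hle⟩ := hex.choose_spec
      have hTm : m < T.ncard := by
        simp only [h𝒜, Set.mem_setOf_eq, not_le] at hTA; exact hTA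
      have hmod := Nat.div_add_mod n 3
      have hmod2 := Nat.mod_lt n (show 0 < 3 by norm_num)
      simp only [h𝒜, Set.mem_setOf_eq]
      omega
    · rintro T1 ⟨hT1, _⟩ T2 ⟨hT2, _⟩ heq
      have e1 : ∃ C : Set (Fin n), T1 = outNbhd G C ∧ 2 * C.ncard + T1.ncard ≤ n :=
        exists_small_comp hT1
      have e2 : ∃ C : Set (Fin n), T2 = outNbhd G C ∧ 2 * C.ncard + T2.ncard ≤ n :=
        exists_small_comp hT2
      simp only [hf, dif_pos e1, dif_pos e2] at heq
      rw [e1.choose_spec.1, e2.choose_spec.1, heq]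
  omega

end CGraphAux

section CAnalyticAux
lemma choose_le_real {n k : ℕ} (h : k ≤ n) :
    (n.choose k : ℝ) ≤ 3 ^ n * (1/2 : ℝ) ^ (n - k) := by
  have hpow := add_pow (1/3 : ℝ) (2/3) n
  have h1 : (1:ℝ) = ∑ m ∈ Finset.range (n+1), (1/3:ℝ)^m * (2/3)^(n-m) * (n.choose m) := by
    rw [← hpow]; norm_num
  have h2 : (1/3:ℝ)^k * (2/3)^(n-k) * (n.choose k) ≤ 1 := by
    calc (1/3:ℝ)^k * (2/3)^(n-k) * (n.choose k)
        ≤ ∑ m ∈ Finset.range (n+1), (1/3:ℝ)^m * (2/3)^(n-m) * (n.choose m) :=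
          Finset.single_le_sum (f := fun m => (1/3:ℝ)^m * (2/3)^(n-m) * (n.choose m))
            (fun i _ => by positivity)
            (Finset.mem_range.mpr (Nat.lt_succ_of_le h))
      _ = 1 := h1.symm
  have hpos : (0:ℝ) < (1/3:ℝ)^k * (2/3)^(n-k) := by positivity
  have key : ((1/3:ℝ)^k * (2/3)^(n-k)) * (3 ^ n * (1/2 : ℝ) ^ (n - k)) = 1 := by
    have hsplit : (3:ℝ)^n = 3^k * 3^(n-k) := by
      rw [← pow_add]; congr 1; omega
    rw [hsplit]
    have e1 : (1/3:ℝ)^k * 3^k = 1 := by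
      rw [← mul_pow]; norm_num
    have e2 : (2/3:ℝ)^(n-k) * (3^(n-k) * (1/2:ℝ)^(n-k)) = 1 := by
      rw [← mul_pow, ← mul_pow]; norm_num
    calc (1/3:ℝ)^k * (2/3)^(n-k) * (3^k * 3^(n-k) * (1/2:ℝ)^(n-k))
        = ((1/3:ℝ)^k * 3^k) * ((2/3)^(n-k) * (3^(n-k) * (1/2:ℝ)^(n-k))) := by ring
      _ = 1 := by rw [e1, e2, mul_one]
  have h3 : ((1/3:ℝ)^k * (2/3)^(n-k)) * (n.choose k) ≤
      ((1/3:ℝ)^k * (2/3)^(n-k)) * (3 ^ n * (1/2 : ℝ) ^ (n - k)) := by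
    rw [key]; linarith [h2]
  exact le_of_mul_le_mul_left h3 hpos

lemma geom_half_le (N : ℕ) : ∑ j ∈ Finset.range N, (1/2:ℝ)^j ≤ 2 := by
  have heq : ∑ j ∈ Finset.range N, (1/2:ℝ)^j = 2 - 2 * (1/2:ℝ)^N := by
    rw [geom_sum_eq (by norm_num : (1/2:ℝ) ≠ 1)]
    field_simp
    ring
  have hp : (0:ℝ) ≤ (1/2:ℝ)^N := by positivity
  rw [heq]; linarith

lemma sum_choose_le (n : ℕ) :
    (∑ k ∈ Finset.range (n/3 + 1), (n.choose k : ℝ)) ≤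
      2 * (3 ^ n * (1/2:ℝ) ^ (n - n/3)) := by
  set m := n / 3 with hm
  have hmn : m ≤ n := Nat.div_le_self n 3
  have hterm : ∀ k ∈ Finset.range (m+1),
      (n.choose k : ℝ) ≤ 3 ^ n * (1/2:ℝ) ^ (n - m) * (1/2:ℝ)^(m - k) := by
    intro k hk
    rw [Finset.mem_range] at hk
    have hkm : k ≤ m := by omega
    have : (n.choose k : ℝ) ≤ 3 ^ n * (1/2 : ℝ) ^ (n - k) := choose_le_real (hkm.trans hmn)
    have hsplit : (1/2:ℝ) ^ (n - k) = (1/2:ℝ) ^ (n - m) * (1/2:ℝ)^(m - k) := by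
      rw [← pow_add]; congr 1; omega
    rw [hsplit] at this; linarith [this]
  calc (∑ k ∈ Finset.range (m+1), (n.choose k : ℝ))
      ≤ ∑ k ∈ Finset.range (m+1), 3 ^ n * (1/2:ℝ) ^ (n - m) * (1/2:ℝ)^(m - k) :=
        Finset.sum_le_sum hterm
    _ = (3 ^ n * (1/2:ℝ) ^ (n - m)) * ∑ k ∈ Finset.range (m+1), (1/2:ℝ)^(m - k) := by
        rw [Finset.mul_sum]
    _ = (3 ^ n * (1/2:ℝ) ^ (n - m)) * ∑ j ∈ Finset.range (m+1), (1/2:ℝ)^j := by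
        congr 1
        rw [← Finset.sum_range_reflect]
        exact Finset.sum_congr rfl fun j hj => by
          rw [Finset.mem_range] at hj; congr 1; omega
    _ ≤ (3 ^ n * (1/2:ℝ) ^ (n - m)) * 2 := by
        have h0 : (0:ℝ) ≤ 3 ^ n * (1/2:ℝ) ^ (n - m) := by positivity
        exact mul_le_mul_of_nonneg_left (geom_half_le (m+1)) h0
    _ = 2 * (3 ^ n * (1/2:ℝ) ^ (n - m)) := by ring

noncomputable def Bc : ℝ := 3 * (2:ℝ) ^ (-(2/3) : ℝ)

lemma Bc_pos : 0 < Bc := by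
  unfold Bc
  positivity

lemma half_pow_le (n : ℕ) : (1/2:ℝ) ^ (n - n/3) ≤ ((2:ℝ) ^ (-(2/3) : ℝ)) ^ n := by
  have h1 : (1/2:ℝ) ^ (n - n/3) = (2:ℝ) ^ (-((n - n/3 : ℕ) : ℝ)) := by
    rw [Real.rpow_neg (by norm_num), Real.rpow_natCast, one_div, inv_pow]
  have h2 : ((2:ℝ) ^ (-(2/3) : ℝ)) ^ n = (2:ℝ) ^ ((-(2/3)) * n : ℝ) := by
    rw [← Real.rpow_natCast ((2:ℝ) ^ (-(2/3) : ℝ)) n, ← Real.rpow_mul (by norm_num)]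
  rw [h1, h2]
  apply Real.rpow_le_rpow_of_exponent_le (by norm_num)
  have hcast : ((n - n/3 : ℕ) : ℝ) = (n:ℝ) - ((n/3 : ℕ) : ℝ) := by
    have : n/3 ≤ n := Nat.div_le_self n 3
    push_cast [this]
    ring
  rw [hcast]
  have h3 : ((n/3 : ℕ) : ℝ) ≤ (n:ℝ) / 3 := by
    have := Nat.div_mul_le_self n 3
    have hc : ((n/3 : ℕ) : ℝ) * 3 ≤ (n:ℝ) := by exact_mod_cast this
    linarith
  linarith

lemma rpow_binH_eq : (2:ℝ) ^ binH (1/3) = Bc := by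
  have hlog : binH (1/3) = Real.logb 2 3 - 2/3 := by
    unfold binH
    have h1 : Real.logb 2 (1/3 : ℝ) = - Real.logb 2 3 := by
      rw [one_div, Real.logb_inv]
    have h2 : (1:ℝ) - 1/3 = 2/3 := by norm_num
    have h3 : Real.logb 2 (2/3 : ℝ) = 1 - Real.logb 2 3 := by
      rw [Real.logb_div (by norm_num) (by norm_num)]
      simp [Real.logb_self_eq_one]
    rw [h2, h1, h3]
    ring
  rw [hlog, Real.rpow_sub (by norm_num)]
  rw [Real.rpow_logb (by norm_num) (by norm_num) (by norm_num)]
  unfold Bc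
  rw [Real.rpow_neg (by norm_num)]
  rw [div_eq_mul_inv]

lemma Bc_lt : Bc < 1.8899 := by
  set x := (2:ℝ) ^ ((2/3) : ℝ) with hx
  have hxpos : 0 < x := Real.rpow_pos_of_pos (by norm_num) _
  have hx3 : x ^ (3:ℕ) = 4 := by
    rw [hx, ← Real.rpow_natCast ((2:ℝ) ^ ((2/3) : ℝ)) 3, ← Real.rpow_mul (by norm_num),
      show ((2:ℝ)/3) * ((3:ℕ):ℝ) = 2 by push_cast; ring,
      show (2:ℝ) = ((2:ℕ):ℝ) by norm_num, Real.rpow_natCast]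
    norm_num
  have hBc : Bc = 3 / x := by
    rw [hx]
    unfold Bc
    rw [Real.rpow_neg (by norm_num : (0:ℝ) ≤ 2)]
    ring
  rw [hBc, div_lt_iff₀ hxpos]
  have hcube : (3:ℝ)^(3:ℕ) < (1.8899 * x)^(3:ℕ) := by
    rw [mul_pow, hx3]
    norm_num
  have := lt_of_pow_lt_pow_left₀ 3 (by positivity : (0:ℝ) ≤ 1.8899 * x) hcube
  exact this

lemma c_le_sum (n : ℕ) : c n ≤ 2 * ∑ k ∈ Finset.range (n / 3 + 1), n.choose k := by
  apply csSup_le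
  · exact ⟨_, ⊥, rfl⟩
  · rintro k ⟨G, rfl⟩
    exact count_minCutSets G

lemma c_le_real (n : ℕ) : (c n : ℝ) ≤ 4 * Bc ^ n := by
  have h0 := c_le_sum n
  have h1 : (c n : ℝ) ≤ 2 * ∑ k ∈ Finset.range (n / 3 + 1), (n.choose k : ℝ) := by
    calc (c n : ℝ) ≤ ((2 * ∑ k ∈ Finset.range (n/3+1), n.choose k : ℕ) : ℝ) := by
          exact_mod_cast h0
      _ = 2 * ∑ k ∈ Finset.range (n / 3 + 1), (n.choose k : ℝ) := by push_cast; ring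
  have h2 := sum_choose_le n
  have h3 : (3:ℝ)^n * (1/2:ℝ)^(n - n/3) ≤ 3^n * ((2:ℝ)^(-(2/3):ℝ))^n :=
    mul_le_mul_of_nonneg_left (half_pow_le n) (by positivity)
  have h4 : Bc ^ n = 3^n * ((2:ℝ)^(-(2/3):ℝ))^n := by rw [Bc, mul_pow]
  calc (c n : ℝ) ≤ 2 * ∑ k ∈ Finset.range (n / 3 + 1), (n.choose k : ℝ) := h1
    _ ≤ 2 * (2 * (3 ^ n * (1/2:ℝ) ^ (n - n/3))) := by linarith
    _ ≤ 4 * (3^n * ((2:ℝ)^(-(2/3):ℝ))^n) := by linarith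
    _ = 4 * Bc ^ n := by rw [h4]

end CAnalyticAux

/-- `lim_{n→∞} c n ^ (1/n) ≤ 2 ^ H(1/3) < 1.8899`. -/
theorem c_limit_le (L : ℝ)
    (hL : Tendsto (fun n : ℕ => (c n : ℝ) ^ (1 / (n : ℝ))) atTop (nhds L)) :
    L ≤ (2 : ℝ) ^ binH (1 / 3) ∧ (2 : ℝ) ^ binH (1 / 3) < 1.8899 := by
  constructor
  · rw [rpow_binH_eq]
    refine le_of_forall_pos_le_add ?_
    intro ε hε
    have hB := Bc_pos
    have hr : 1 < (Bc + ε)/Bc := by rw [lt_div_iff₀ hB]; linarith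
    have hev : ∀ᶠ n : ℕ in atTop, 4 ≤ ((Bc+ε)/Bc)^n :=
      (tendsto_pow_atTop_atTop_of_one_lt hr).eventually_ge_atTop 4
    have hev2 : ∀ᶠ n : ℕ in atTop, (c n : ℝ) ^ (1/(n:ℝ)) ≤ Bc + ε := by
      filter_upwards [hev, eventually_ge_atTop 1] with n h4 hn1
      have hn : (0:ℝ) < (n:ℝ) := by exact_mod_cast Nat.lt_of_lt_of_le Nat.zero_lt_one hn1
      have hεB : (0:ℝ) < Bc + ε := by linarith
      have hc : (c n : ℝ) ≤ (Bc + ε)^n := by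
        have hcr := c_le_real n
        have h5 : 4 * Bc^n ≤ ((Bc+ε)/Bc)^n * Bc^n :=
          mul_le_mul_of_nonneg_right h4 (by positivity)
        have h6 : ((Bc+ε)/Bc)^n * Bc^n = (Bc+ε)^n := by
          rw [← mul_pow, div_mul_cancel₀ _ (ne_of_gt hB)]
        linarith
      calc (c n:ℝ)^(1/(n:ℝ)) ≤ ((Bc+ε)^n)^(1/(n:ℝ)) :=
          Real.rpow_le_rpow (by positivity) hc (one_div_nonneg.mpr hn.le)
        _ = Bc + ε := by
          rw [← Real.rpow_natCast (Bc+ε) n, ← Real.rpow_mul hεB.le,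
            mul_one_div, div_self (ne_of_gt hn), Real.rpow_one]
    exact le_of_tendsto hL hev2
  · rw [rpow_binH_eq]
    exact Bc_lt
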